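/- Let A be a finite nonempty set and T a symmetric, irreflexive, saturated relation on A. If Q, Q₁ ∈ 𝒫^T(A) and Q₁ ⊆ Q^T, then ((Q ∪ Q₁)^T)^T ∈ 𝒫^T(A); i.e. the partial operation Q ⊕ Q₁ := ((Q ∪ Q₁)^T)^T is well defined on 𝒫^T(A). -/

import Mathlib

/-- For `B ⊆ A`, `B^T := {l ∈ A | ∀ l₁ ∈ B, (l₁, l) ∈ T}`. -/
def polar {α : Type*} (T : α → α → Prop) (B : Set α) : Set α :=
  {l | ∀ l₁ ∈ B, T l₁ l}

/-- `𝒫_T(A)`: subsets whose distinct elements are pairwise related by `T`. -/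
def PTset {α : Type*} (T : α → α → Prop) : Set (Set α) :=
  {U | ∀ l ∈ U, ∀ l₁ ∈ U, l₁ ≠ l → T l l₁}

/-- `𝒫^T(A)`: the image of `𝒫_T(A)` under `B ↦ B^T`. -/
def PTup {α : Type*} (T : α → α → Prop) : Set (Set α) :=
  polar T '' PTset T

/-- `T` is symmetric: for all `l ≠ l₁`, `(l, l₁) ∈ T ↔ (l₁, l) ∈ T`. -/
def SymmRel {α : Type*} (T : α → α → Prop) : Prop :=
  ∀ l l₁, l ≠ l₁ → (T l l₁ ↔ T l₁ l)

/-- `T` is irreflexive. -/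
def IrreflRel {α : Type*} (T : α → α → Prop) : Prop :=
  ∀ l, ¬ T l l

/-- `M` is a maximal element of `𝒫_T(A)` with respect to inclusion. -/
def MaxPT {α : Type*} (T : α → α → Prop) (M : Set α) : Prop :=
  M ∈ PTset T ∧ ∀ M' ∈ PTset T, M ⊆ M' → M' = M

/-- `T` is saturated: for every maximal `M ∈ 𝒫_T(A)` and every `B ⊆ M`,
`B^T = ((M \ B)^T)^T`. -/
def SaturatedRel {α : Type*} (T : α → α → Prop) : Prop :=
  ∀ M, MaxPT T M → ∀ B ⊆ M, polar T B = polar T (polar T (M \ B))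

/-!
Saturation says that every `X = U^T ∈ 𝒫^T(A)` is also `W^{TT}` for the clique `W = M \ U`, where
`M ⊇ U` is a maximal clique; then `W ⊆ X` and `W^T = X^T`. For `Q, Q₁ ∈ 𝒫^T(A)` with
`Q₁ ⊆ Q^T` the cliques `W ⊆ Q` and `W₁ ⊆ Q₁` so obtained are mutually related, so `V = W ∪ W₁` is
a clique with `V^T = (Q ∪ Q₁)^T`, and `V^{TT}` lies in `𝒫^T(A)` because `V^T` does.
-/

section Polar

variable {α : Type*} {T : α → α → Prop}

lemma mem_PTset_iff {U : Set α} : U ∈ PTset T ↔ U.Pairwise T :=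
  forall₂_congr fun _ _ => forall₂_congr fun _ _ => by rw [ne_comm]

lemma polar_antitone : Antitone (polar T) :=
  fun _ _ h _ hl l₁ hl₁ => hl l₁ (h hl₁)

lemma polar_union (B C : Set α) : polar T (B ∪ C) = polar T B ∩ polar T C := by
  ext l
  simp only [polar, Set.mem_union, or_imp, forall_and, Set.mem_inter_iff, Set.mem_ofPred_eq]

lemma subset_polar_polar (hsymm : SymmRel T) (hirr : IrreflRel T) (B : Set α) :
    B ⊆ polar T (polar T B) := by
  intro b hb l hl
  have hbl : T b l := hl b hb
  have hne : b ≠ l := by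
    rintro rfl
    exact hirr b hbl
  exact (hsymm b l hne).mp hbl

lemma polar_polar_polar (hsymm : SymmRel T) (hirr : IrreflRel T) (B : Set α) :
    polar T (polar T (polar T B)) = polar T B :=
  (polar_antitone (subset_polar_polar hsymm hirr B)).antisymm
    (subset_polar_polar hsymm hirr (polar T B))

lemma exists_maxPT_superset {U : Set α} (hU : U ∈ PTset T) : ∃ M, U ⊆ M ∧ MaxPT T M := by
  have chain_bound : ∀ c ⊆ PTset T, IsChain (· ⊆ ·) c → c.Nonempty →
      ∃ ub ∈ PTset T, ∀ s ∈ c, s ⊆ ub := by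
    intro c hc hchain _
    refine ⟨⋃₀ c, ?_, fun s hs => Set.subset_sUnion_of_mem hs⟩
    rw [mem_PTset_iff, Set.pairwise_sUnion hchain.directedOn]
    exact fun s hs => mem_PTset_iff.mp (hc hs)
  obtain ⟨M, hUM, hM⟩ := zorn_subset_nonempty (PTset T) chain_bound U hU
  exact ⟨M, hUM, hM.prop, fun M' hM' hMM' => (hM.eq_of_subset hM' hMM').symm⟩

lemma exists_mem_PTset_subset_polar_eq (hsymm : SymmRel T) (hirr : IrreflRel T)
    (hsat : SaturatedRel T) {X : Set α} (hX : X ∈ PTup T) :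
    ∃ W ∈ PTset T, W ⊆ X ∧ polar T W = polar T X := by
  obtain ⟨U, hU, rfl⟩ := hX
  obtain ⟨M, hUM, hM⟩ := exists_maxPT_superset hU
  have hU_eq : polar T U = polar T (polar T (M \ U)) := hsat M hM U hUM
  refine ⟨M \ U, fun l hl l₁ hl₁ hne => hM.1 l hl.1 l₁ hl₁.1 hne, ?_, ?_⟩
  · rw [hU_eq]
    exact subset_polar_polar hsymm hirr _
  · rw [hU_eq, polar_polar_polar hsymm hirr]

lemma union_mem_PTset (hsymm : SymmRel T) {U V : Set α} (hU : U ∈ PTset T) (hV : V ∈ PTset T)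
    (hUV : V ⊆ polar T U) : U ∪ V ∈ PTset T := by
  rw [mem_PTset_iff] at hU hV ⊢
  refine Set.pairwise_union.mpr ⟨hU, hV, fun u hu v hv hne => ?_⟩
  have huv : T u v := hUV hv u hu
  exact ⟨huv, (hsymm u v hne).mp huv⟩

lemma polar_polar_mem_PTup (hsymm : SymmRel T) (hirr : IrreflRel T) (hsat : SaturatedRel T)
    {V : Set α} (hV : V ∈ PTset T) : polar T (polar T V) ∈ PTup T := by
  obtain ⟨W, hW, -, hW_eq⟩ := exists_mem_PTset_subset_polar_eq hsymm hirr hsat ⟨V, hV, rfl⟩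
  exact ⟨W, hW, hW_eq⟩

end Polar

theorem stmt2_general {α : Type*} (T : α → α → Prop)
    (hsymm : SymmRel T) (hirr : IrreflRel T) (hsat : SaturatedRel T) :
    ∀ Q ∈ PTup T, ∀ Q₁ ∈ PTup T, Q₁ ⊆ polar T Q →
      polar T (polar T (Q ∪ Q₁)) ∈ PTup T := by
  intro Q hQ Q₁ hQ₁ hQQ₁
  obtain ⟨W, hW, hWQ, hW_eq⟩ := exists_mem_PTset_subset_polar_eq hsymm hirr hsat hQ
  obtain ⟨W₁, hW₁, hW₁Q₁, hW₁_eq⟩ := exists_mem_PTset_subset_polar_eq hsymm hirr hsat hQ₁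
  have hV : W ∪ W₁ ∈ PTset T :=
    union_mem_PTset hsymm hW hW₁ (hW₁Q₁.trans (hQQ₁.trans (polar_antitone hWQ)))
  have hV_eq : polar T (W ∪ W₁) = polar T (Q ∪ Q₁) := by
    rw [polar_union, polar_union, hW_eq, hW₁_eq]
  rw [← hV_eq]
  exact polar_polar_mem_PTup hsymm hirr hsat hV

theorem stmt2 {α : Type*} [Fintype α] [Nonempty α] (T : α → α → Prop)
    (hsymm : SymmRel T) (hirr : IrreflRel T) (hsat : SaturatedRel T) :
    ∀ Q ∈ PTup T, ∀ Q₁ ∈ PTup T, Q₁ ⊆ polar T Q →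
      polar T (polar T (Q ∪ Q₁)) ∈ PTup T :=
  stmt2_general T hsymm hirr hsat
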